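/- arXiv:1303.3728 — 11 statements merged into one kernel-verified Lean document; each statement's English description precedes it below -/
import Mathlib

section
/- Let T be the formal power series over ℚ satisfying T = 1 + z·T^2 (the generating function of binary trees). Then for all integers p ≥ 1 and k ≥ 0, the coefficient of z^k in T^p equals p/(2k+p) · C(2k+p, k). -/
/-!
Multiplying `T = 1 + z T²` by `T^p` gives `T^(p+1) = T^p + z T^(p+2)`, so the coefficients
`a(p, k) = [z^k] T^p` satisfy `a(p+1, k+1) = a(p, k+1) + a(p+2, k)` with `a(p, 0) = 1` and
`a(0, k+1) = 0`. The ballot numbers `p/(2k+p) · C(2k+p, k)` obey the same recurrence and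
boundary values, so a double induction (on `k`, then on `p`) identifies the two.
-/

open PowerSeries

/-- `ballotNumber 0 0 = 0` because `0 / 0 = 0`, whereas `[z^0] T^0 = 1`. -/
def ballotNumber (p k : ℕ) : ℚ :=
  (p : ℚ) / (2 * k + p) * (Nat.choose (2 * k + p) k : ℚ)

@[simp]
lemma ballotNumber_zero_left (k : ℕ) : ballotNumber 0 k = 0 := by
  simp [ballotNumber]

lemma ballotNumber_zero_right {p : ℕ} (hp : p ≠ 0) : ballotNumber p 0 = 1 := by
  simp [ballotNumber, hp]

lemma ballotNumber_succ_succ (p k : ℕ) :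
    ballotNumber (p + 1) (k + 1) = ballotNumber p (k + 1) + ballotNumber (p + 2) k := by
  have hn : 2 * (k + 1) + (p + 1) = (2 * k + p + 2) + 1 := by ring
  have hn' : 2 * (k + 1) + p = 2 * k + p + 2 := by ring
  have hn'' : 2 * k + (p + 2) = 2 * k + p + 2 := by ring
  have absorb : ((2 * k + p + 2 + 1 : ℕ) : ℚ) * (Nat.choose (2 * k + p + 2) k : ℚ)
      = (Nat.choose (2 * k + p + 2 + 1) (k + 1) : ℚ) * ((k : ℚ) + 1) := by
    exact_mod_cast Nat.add_one_mul_choose_eq (2 * k + p + 2) k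
  have pascal : (Nat.choose (2 * k + p + 2 + 1) (k + 1) : ℚ)
      = (Nat.choose (2 * k + p + 2) k : ℚ) + (Nat.choose (2 * k + p + 2) (k + 1) : ℚ) := by
    exact_mod_cast Nat.choose_succ_succ (2 * k + p + 2) k
  simp only [ballotNumber, hn, hn', hn'']
  push_cast at absorb pascal ⊢
  field_simp
  linear_combination
    ((p : ℚ) * (2 * k + p + 3) * (2 * k + p + 2)) * pascal - 2 * (2 * (k : ℚ) + p + 2) * absorb

namespace BinaryTreeSeries

variable {R : Type*} [CommSemiring R] {T : R⟦X⟧}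

lemma constantCoeff_eq_one (hT : T = 1 + X * T ^ 2) : constantCoeff T = 1 := by
  rw [hT]
  simp

lemma pow_succ_eq (hT : T = 1 + X * T ^ 2) (p : ℕ) : T ^ (p + 1) = T ^ p + X * T ^ (p + 2) :=
  calc T ^ (p + 1) = T ^ p * (1 + X * T ^ 2) := by rw [← hT, pow_succ]
    _ = T ^ p + X * T ^ (p + 2) := by ring

lemma coeff_succ_pow_succ (hT : T = 1 + X * T ^ 2) (p k : ℕ) :
    coeff (k + 1) (T ^ (p + 1)) = coeff (k + 1) (T ^ p) + coeff k (T ^ (p + 2)) := by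
  rw [pow_succ_eq hT, map_add, coeff_succ_X_mul]

lemma coeff_zero_pow (hT : T = 1 + X * T ^ 2) (p : ℕ) : coeff 0 (T ^ p) = 1 := by
  simp [coeff_zero_eq_constantCoeff_apply, constantCoeff_eq_one hT]

lemma coeff_succ_pow_eq_ballotNumber {T : ℚ⟦X⟧} (hT : T = 1 + X * T ^ 2) (k p : ℕ) :
    coeff (k + 1) (T ^ p) = ballotNumber p (k + 1) := by
  have previous : ∀ p, coeff k (T ^ (p + 2)) = ballotNumber (p + 2) k := by
    cases k with
    | zero => exact fun p => by rw [coeff_zero_pow hT, ballotNumber_zero_right (by omega)]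
    | succ k => exact fun p => coeff_succ_pow_eq_ballotNumber hT k (p + 2)
  induction p with
  | zero => simp
  | succ p ih => rw [coeff_succ_pow_succ hT, ih, previous, ballotNumber_succ_succ]

end BinaryTreeSeries

theorem coeff_pow_binary_tree_series (T : PowerSeries ℚ)
    (hT : T = 1 + PowerSeries.X * T ^ 2) :
    ∀ p k : ℕ, 1 ≤ p →
      PowerSeries.coeff k (T ^ p) =
        (p : ℚ) / (2 * k + p) * (Nat.choose (2 * k + p) k : ℚ) := by
  intro p k hp
  change _ = ballotNumber p k
  cases k with
  | zero => rw [BinaryTreeSeries.coeff_zero_pow hT, ballotNumber_zero_right (by omega)]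
  | succ k => exact BinaryTreeSeries.coeff_succ_pow_eq_ballotNumber hT k p
end

section
/- Let T be the formal power series over ℚ satisfying T = 1 + w·T^3 (the generating function of ternary trees). Then for all integers n ≥ 0, the coefficient of w^n in T equals C(3n, n)/(2n+1). -/
/-!
Multiplying `T = 1 + X T^p` by `T^r` gives `T^(r+1) = T^r + X T^(r+p)`, a recurrence for the
coefficients of all powers of `T` at once. The Fuss–Catalan numbers `r/(pn+r) · C(pn+r, n)`
satisfy the same recurrence, which is an identity between binomial coefficients; a double
induction (on `n`, then on `r`) identifies the two. The theorem is the case `p = 3`, `r = 1`.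
-/

open PowerSeries

/-- At `n = r = 0` this is the junk value `0`, whereas the coefficient of `X^0` in `T^0` is `1`. -/
def fussCatalan (p r n : ℕ) : ℚ :=
  r / (p * n + r) * (p * n + r).choose n

@[simp]
lemma fussCatalan_zero_left (p n : ℕ) : fussCatalan p 0 n = 0 := by
  simp [fussCatalan]

lemma fussCatalan_zero_right (p r : ℕ) (hr : r ≠ 0) : fussCatalan p r 0 = 1 := by
  simp [fussCatalan, hr]

lemma fussCatalan_add_one_add_one {p : ℕ} (hp : 0 < p) (r n : ℕ) :
    fussCatalan p (r + 1) (n + 1) = fussCatalan p r (n + 1) + fussCatalan p (r + p) n := by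
  obtain ⟨N, hN⟩ : ∃ N, N = p * n + p + r := ⟨_, rfl⟩
  have hNq : (N : ℚ) = p * n + p + r := by rw [hN]; push_cast; ring
  have hnN : n ≤ N := hN ▸ le_add_right (le_add_right (Nat.le_mul_of_pos_left n hp))
  have hup : ((N + 1).choose (n + 1) : ℚ) = (N + 1) * N.choose n / (n + 1) := by
    rw [eq_div_iff (by positivity)]; exact_mod_cast (Nat.add_one_mul_choose_eq N n).symm
  have hright : (N.choose (n + 1) : ℚ) = N.choose n * (N - n) / (n + 1) := by
    rw [eq_div_iff (by positivity), ← Nat.cast_sub hnN]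
    exact_mod_cast Nat.choose_succ_right_eq N n
  simp only [fussCatalan, show p * (n + 1) + (r + 1) = N + 1 by rw [hN]; ring,
    show p * (n + 1) + r = N by rw [hN]; ring, show p * n + (r + p) = N by rw [hN]; ring]
  push_cast
  rw [hup, hright, hNq]
  field_simp
  ring

section

variable {R : Type*} [CommSemiring R] {T : R⟦X⟧} {p : ℕ}

lemma pow_add_one_eq_add_X_mul (hT : T = 1 + X * T ^ p) (r : ℕ) :
    T ^ (r + 1) = T ^ r + X * T ^ (r + p) := by
  calc T ^ (r + 1) = T ^ r * (1 + X * T ^ p) := by rw [pow_succ, ← hT]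
    _ = T ^ r + X * T ^ (r + p) := by ring

lemma coeff_succ_pow_add_one (hT : T = 1 + X * T ^ p) (n r : ℕ) :
    coeff (n + 1) (T ^ (r + 1)) = coeff (n + 1) (T ^ r) + coeff n (T ^ (r + p)) := by
  rw [pow_add_one_eq_add_X_mul hT, map_add, coeff_succ_X_mul]

lemma constantCoeff_eq_one_of_eq_one_add_X_mul (hT : T = 1 + X * T ^ p) :
    constantCoeff T = 1 := by
  rw [hT]; simp

end

theorem coeff_pow_eq_fussCatalan {T : ℚ⟦X⟧} {p : ℕ} (hp : 0 < p) (hT : T = 1 + X * T ^ p)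
    (n r : ℕ) : coeff n (T ^ (r + 1)) = fussCatalan p (r + 1) n := by
  induction n generalizing r with
  | zero =>
    simp [coeff_zero_eq_constantCoeff_apply, constantCoeff_eq_one_of_eq_one_add_X_mul hT,
      fussCatalan_zero_right]
  | succ n ih =>
    suffices h : ∀ r, coeff (n + 1) (T ^ r) = fussCatalan p r (n + 1) from h (r + 1)
    intro r
    induction r with
    | zero => simp [coeff_one]
    | succ r ihr =>
      obtain ⟨q, hq⟩ : ∃ q, r + p = q + 1 := ⟨r + p - 1, by omega⟩
      rw [coeff_succ_pow_add_one hT, ihr, hq, ih, ← hq, fussCatalan_add_one_add_one hp]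

theorem coeff_ternary_tree_series (T : PowerSeries ℚ)
    (hT : T = 1 + PowerSeries.X * T ^ 3) :
    ∀ n : ℕ,
      PowerSeries.coeff n T = (Nat.choose (3 * n) n : ℚ) / (2 * n + 1) := by
  intro n
  have hchoose : ((3 * n + 1).choose n : ℚ) * (2 * n + 1) = (3 * n).choose n * (3 * n + 1) := by
    have h := Nat.choose_mul_succ_eq (3 * n) n
    rw [show 3 * n + 1 - n = 2 * n + 1 by omega] at h
    exact_mod_cast h.symm
  rw [← pow_one T, coeff_pow_eq_fussCatalan (by norm_num) hT n 0, fussCatalan]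
  field_simp
  linear_combination hchoose
end

section
/- Define, for integers m ≥ k ≥ 0, A(m,k) = (2k+1)/(2m+1) · C(2m+1, m-k), and for integers n ≥ m ≥ 0, B(n,m) = (-1)^{n+m} · C(n+m, 2m). Then for all integers n ≥ p ≥ 0, the sum over k from p to n of A(n,k)·B(k,p) equals 1 if n = p and 0 otherwise. (That is, the lower-triangular matrices A and B are mutually inverse.) -/
/-- `A m k = (2k+1)/(2m+1) * C(2m+1, m-k)` -/
def matA (m k : ℕ) : ℚ :=
  (2 * k + 1 : ℚ) / (2 * m + 1) * (Nat.choose (2 * m + 1) (m - k) : ℚ)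

/-- `B n m = (-1)^(n+m) * C(n+m, 2m)` -/
def matB (n m : ℕ) : ℚ :=
  (-1 : ℚ) ^ (n + m) * (Nat.choose (n + m) (2 * m) : ℚ)

/-!
For `p < n` the sum `∑ₖ A(n,k) B(k,p)` is Gosper-summable: up to the nonzero factor
`(n - p)(2n + 1)` its summand is `G(k+1) - G(k)` for the hypergeometric term
`G(k) = (-1)^(k+p+1) (k - p)(k + n + 1) C(2n+1, n+k+1) C(k+p, 2p)`, which vanishes at both
ends `k = p` and `k = n + 1`. The diagonal entries of `A` and `B` are `1`.
-/

open Finset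

section Choose

variable {R : Type*} [CommRing R]

theorem Nat.cast_choose_succ_right_mul (n k : ℕ) :
    (n.choose (k + 1) : R) * (k + 1) = n.choose k * ((n : R) - k) := by
  rcases le_or_gt k n with hk | hk
  · have h := congrArg (Nat.cast : ℕ → R) (Nat.choose_succ_right_eq n k)
    push_cast [Nat.cast_sub hk] at h
    exact h
  · simp [Nat.choose_eq_zero_of_lt hk, Nat.choose_eq_zero_of_lt (Nat.lt_succ_of_lt hk)]

theorem Nat.cast_choose_mul_succ (n k : ℕ) :
    (n.choose k : R) * (n + 1) = (n + 1).choose k * ((n : R) + 1 - k) := by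
  rcases le_or_gt k (n + 1) with hk | hk
  · have h := congrArg (Nat.cast : ℕ → R) (Nat.choose_mul_succ_eq n k)
    push_cast [Nat.cast_sub hk] at h
    exact h
  · simp [Nat.choose_eq_zero_of_lt hk, Nat.choose_eq_zero_of_lt (Nat.lt_of_succ_lt hk)]

end Choose

theorem matA_self (n : ℕ) : matA n n = 1 := by
  have : (2 * n + 1 : ℚ) ≠ 0 := by positivity
  simp [matA, this]

theorem matB_self (n : ℕ) : matB n n = 1 := by
  simp [matB, ← two_mul, pow_mul]

theorem two_mul_add_one_mul_matA_mul_matB {n k : ℕ} (hk : k ≤ n) (p : ℕ) :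
    (2 * n + 1 : ℚ) * (matA n k * matB k p) =
      (2 * k + 1) * (-1) ^ (k + p) * (2 * n + 1).choose (n + k + 1) * (k + p).choose (2 * p) := by
  have hsymm : (2 * n + 1).choose (n - k) = (2 * n + 1).choose (n + k + 1) :=
    Nat.choose_symm_of_eq_add (by omega)
  have : (2 * n + 1 : ℚ) ≠ 0 := by positivity
  rw [matA, matB, hsymm]
  field_simp

def matABAntidiff (n p k : ℕ) : ℚ :=
  (-1) ^ (k + p + 1) * ((k : ℚ) - p) * ((k : ℚ) + n + 1) *
    (2 * n + 1).choose (n + k + 1) * (k + p).choose (2 * p)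

theorem matABAntidiff_succ_sub (n p k : ℕ) :
    matABAntidiff n p (k + 1) - matABAntidiff n p k =
      ((n : ℚ) - p) * ((2 * k + 1) * (-1) ^ (k + p) *
        (2 * n + 1).choose (n + k + 1) * (k + p).choose (2 * p)) := by
  -- absorption rewrites `G (k+1)` over the binomials of `G k`, so no division is needed
  have hA := Nat.cast_choose_succ_right_mul (R := ℚ) (2 * n + 1) (n + k + 1)
  have hB := Nat.cast_choose_mul_succ (R := ℚ) (k + p) (2 * p)
  push_cast at hA hB
  have hG : matABAntidiff n p (k + 1) =
      (-1) ^ (k + p) * ((n : ℚ) - k) * (k + p + 1) *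
        (2 * n + 1).choose (n + k + 1) * (k + p).choose (2 * p) := by
    rw [matABAntidiff, show n + (k + 1) + 1 = n + k + 1 + 1 by ring,
      show k + 1 + p = k + p + 1 by ring]
    push_cast
    linear_combination (-1) ^ (k + p) * (((k + p + 1).choose (2 * p) : ℚ) * ((k : ℚ) + 1 - p) * hA
      - (2 * n + 1).choose (n + k + 1) * ((n : ℚ) - k) * hB)
  rw [hG, matABAntidiff]
  ring

theorem matABAntidiff_self (n p : ℕ) : matABAntidiff n p p = 0 := by
  simp [matABAntidiff]

theorem matABAntidiff_succ_right (n p : ℕ) : matABAntidiff n p (n + 1) = 0 := by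
  simp [matABAntidiff, Nat.choose_eq_zero_of_lt (show 2 * n + 1 < n + (n + 1) + 1 by omega)]

theorem sum_matA_mul_matB_of_lt {n p : ℕ} (hpn : p < n) :
    ∑ k ∈ Icc p n, matA n k * matB k p = 0 := by
  have htel : ((n : ℚ) - p) * (2 * n + 1) * ∑ k ∈ Icc p n, matA n k * matB k p = 0 := by
    calc ((n : ℚ) - p) * (2 * n + 1) * ∑ k ∈ Icc p n, matA n k * matB k p
        = ∑ k ∈ Icc p n, (matABAntidiff n p (k + 1) - matABAntidiff n p k) := by
          rw [mul_sum]
          refine sum_congr rfl fun k hk => ?_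
          rw [matABAntidiff_succ_sub, ← two_mul_add_one_mul_matA_mul_matB (mem_Icc.1 hk).2]
          ring
      _ = 0 := by
          rw [sum_Icc_sub hpn.le, matABAntidiff_self, matABAntidiff_succ_right, sub_zero]
  have hnp : (n : ℚ) - p ≠ 0 := sub_ne_zero.2 (by exact_mod_cast hpn.ne')
  have hn : (2 * n + 1 : ℚ) ≠ 0 := by positivity
  simpa [hnp, hn] using htel

theorem matA_matB_inverse :
    ∀ n p : ℕ, p ≤ n →
      (∑ k ∈ Finset.Icc p n, matA n k * matB k p) =
        if n = p then 1 else 0 := by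
  intro n p hpn
  rcases hpn.eq_or_lt with rfl | hlt
  · simp [matA_self, matB_self]
  · rw [if_neg hlt.ne', sum_matA_mul_matB_of_lt hlt]
end

section
/- For every integer b ≥ 1 and every rational (or real) r, the following polynomial identity holds: (1/b) ∑_{p=1}^{b} C(b,p) C(b,p-1) (1-r)^p = ∑_{ℓ=0}^{b} (-1)^{b-ℓ} C(b+ℓ, 2ℓ) Cat(ℓ) r^{b-ℓ}, where Cat(ℓ) = C(2ℓ,ℓ)/(ℓ+1) is the ℓ-th Catalan number. (This shows that the two algebraic equations for the generating series R^{(d)} of d-irreducible bipartite slices, obtained respectively by the substitution approach and by the slice decomposition, coincide.) -/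
/-- The `ℓ`-th Catalan number as a rational: `C(2ℓ,ℓ)/(ℓ+1)`. -/
def catQ (ℓ : ℕ) : ℚ := (Nat.choose (2 * ℓ) ℓ : ℚ) / (ℓ + 1)

/-!
Expanding `(1 - r)^p = ∑ₘ C(p,m) (-r)^m` reduces the identity to the coefficientwise statement
`∑ₚ C(b,p) C(b,p-1) C(p,m) = b · Cat(ℓ) · C(b+ℓ, 2ℓ)` with `ℓ = b - m`. Writing
`C(b,p) C(p,m) = C(b,m) C(b-m,p-m)` and `C(b,p-1) = C(b,b+1-p)`, Vandermonde's identity turns the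
left side into `C(b,m) C(2b-m, b+1-m)`, and the product `C(m+ℓ,ℓ) C(m+2ℓ,ℓ+1)` is rewritten as
`(m+ℓ)/(ℓ+1) · C(2ℓ,ℓ) C(m+2ℓ,2ℓ)` by two elementary binomial identities.
-/

open Finset

theorem add_one_pow_eq_sum_range_of_le {R : Type*} [CommSemiring R] (x : R) {p n : ℕ}
    (hpn : p ≤ n) : (x + 1) ^ p = ∑ m ∈ range (n + 1), x ^ m * p.choose m := by
  rw [add_pow]
  simp only [one_pow, mul_one]
  refine sum_subset (range_subset_range.2 (by omega)) fun m _ hm => ?_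
  rw [Nat.choose_eq_zero_of_lt (by simp at hm; omega), Nat.cast_zero, mul_zero]

namespace Nat

theorem sum_Icc_choose_mul_choose_pred_mul_choose (b m : ℕ) :
    ∑ p ∈ Icc 1 b, b.choose p * b.choose (p - 1) * p.choose m =
      b.choose m * (2 * b - m).choose (b + 1 - m) := by
  rcases lt_or_ge b m with hbm | hmb
  · rw [choose_eq_zero_of_lt hbm, zero_mul]
    exact sum_eq_zero fun p hp => by
      rw [choose_eq_zero_of_lt (n := p) (by rw [mem_Icc] at hp; omega), mul_zero]
  rw [show 2 * b - m = (b - m) + b by omega, add_choose_eq, mul_sum]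
  have le_of_ne_zero {p : ℕ} (h : b.choose p * b.choose (p - 1) * p.choose m ≠ 0) : m ≤ p :=
    not_lt.1 fun hpm => h (by rw [choose_eq_zero_of_lt hpm, mul_zero])
  refine sum_bij_ne_zero (fun p _ _ => (p - m, b + 1 - p)) ?_ ?_ ?_ ?_
  · intro p hp hne
    have := le_of_ne_zero hne
    rw [mem_Icc] at hp
    rw [HasAntidiagonal.mem_antidiagonal]
    omega
  · intro p₁ hp₁ _ p₂ hp₂ _ h
    rw [mem_Icc] at hp₁ hp₂
    rw [Prod.mk.injEq] at h
    omega
  · rintro ⟨i, j⟩ hij hne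
    rw [HasAntidiagonal.mem_antidiagonal] at hij
    have hi : i ≤ b - m := not_lt.1 fun h => hne (by rw [choose_eq_zero_of_lt h]; simp)
    have hj : j ≤ b := not_lt.1 fun h => hne (by rw [choose_eq_zero_of_lt h]; simp)
    refine ⟨m + i, mem_Icc.2 ⟨by omega, by omega⟩, ?_, ?_⟩
    · exact mul_ne_zero (mul_ne_zero (choose_pos (by omega)).ne' (choose_pos (by omega)).ne')
        (choose_pos (by omega)).ne'
    · rw [Prod.mk.injEq]
      omega
  · intro p hp hne
    have hmp := le_of_ne_zero hne
    rw [mem_Icc] at hp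
    rw [mul_right_comm, choose_mul hmp, show b + 1 - p = b - (p - 1) by omega,
      choose_symm (by omega), mul_assoc]

theorem succ_mul_choose_mul_choose_succ (m ℓ : ℕ) :
    (ℓ + 1) * ((m + ℓ).choose m * (m + 2 * ℓ).choose (ℓ + 1)) =
      (m + ℓ) * (2 * ℓ).choose ℓ * (m + 2 * ℓ).choose (2 * ℓ) := by
  have h_succ := choose_succ_right_eq (m + 2 * ℓ) ℓ
  have h_mul := choose_mul (n := m + 2 * ℓ) (k := 2 * ℓ) (s := ℓ) (by omega)
  rw [show m + 2 * ℓ - ℓ = m + ℓ by omega] at h_succ h_mul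
  rw [show 2 * ℓ - ℓ = ℓ by omega] at h_mul
  rw [choose_symm_add]
  calc (ℓ + 1) * ((m + ℓ).choose ℓ * (m + 2 * ℓ).choose (ℓ + 1))
      = (m + ℓ).choose ℓ * ((m + 2 * ℓ).choose (ℓ + 1) * (ℓ + 1)) := by ring
    _ = (m + ℓ) * ((m + 2 * ℓ).choose ℓ * (m + ℓ).choose ℓ) := by rw [h_succ]; ring
    _ = (m + ℓ) * (2 * ℓ).choose ℓ * (m + 2 * ℓ).choose (2 * ℓ) := by rw [← h_mul]; ring

end Nat

theorem sum_Icc_choose_mul_choose_pred_mul_choose_eq_catQ (b m : ℕ) (hmb : m ≤ b) :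
    ∑ p ∈ Icc 1 b, (b.choose p : ℚ) * (b.choose (p - 1) : ℚ) * (p.choose m : ℚ) =
      b * catQ (b - m) * ((b + (b - m)).choose (2 * (b - m)) : ℚ) := by
  obtain ⟨ℓ, rfl⟩ := Nat.exists_eq_add_of_le hmb
  have h_sum := Nat.sum_Icc_choose_mul_choose_pred_mul_choose (m + ℓ) m
  have h_cat := Nat.succ_mul_choose_mul_choose_succ m ℓ
  rw [show 2 * (m + ℓ) - m = m + 2 * ℓ by omega, show m + ℓ + 1 - m = ℓ + 1 by omega] at h_sum
  rw [show m + ℓ - m = ℓ by omega, show m + ℓ + ℓ = m + 2 * ℓ by omega, catQ]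
  rw [← h_sum] at h_cat
  have h_cat' : ((ℓ : ℚ) + 1) * ∑ p ∈ Icc 1 (m + ℓ),
      ((m + ℓ).choose p : ℚ) * ((m + ℓ).choose (p - 1) : ℚ) * (p.choose m : ℚ) =
        (m + ℓ) * (2 * ℓ).choose ℓ * (m + 2 * ℓ).choose (2 * ℓ) :=
    mod_cast h_cat
  field_simp
  push_cast
  linarith

theorem substitution_eq_slice_equation :
    ∀ b : ℕ, 1 ≤ b → ∀ r : ℚ,
      (1 / (b : ℚ)) *
          ∑ p ∈ Finset.Icc 1 b,
            (Nat.choose b p : ℚ) * (Nat.choose b (p - 1) : ℚ) * (1 - r) ^ p =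
        ∑ ℓ ∈ Finset.range (b + 1),
          (-1 : ℚ) ^ (b - ℓ) * (Nat.choose (b + ℓ) (2 * ℓ) : ℚ) * catQ ℓ *
            r ^ (b - ℓ) := by
  intro b hb r
  have hb0 : (b : ℚ) ≠ 0 := by positivity
  have h_expand : ∀ p ∈ Icc 1 b, (b.choose p : ℚ) * (b.choose (p - 1) : ℚ) * (1 - r) ^ p =
      ∑ m ∈ range (b + 1), (-r) ^ m * ((b.choose p : ℚ) * b.choose (p - 1) * p.choose m) := by
    intro p hp
    rw [sub_eq_neg_add, add_one_pow_eq_sum_range_of_le _ (mem_Icc.1 hp).2, mul_sum]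
    exact sum_congr rfl fun m _ => by ring
  rw [sum_congr rfl h_expand, sum_comm, mul_sum]
  conv_rhs => rw [← sum_range_reflect]
  refine sum_congr rfl fun m hm => ?_
  have hmb : m ≤ b := Nat.lt_succ_iff.1 (mem_range.1 hm)
  rw [← mul_sum, sum_Icc_choose_mul_choose_pred_mul_choose_eq_catQ b m hmb,
    Nat.add_sub_cancel, Nat.sub_sub_self hmb, neg_pow]
  field_simp
end

section
/- Let K be a field and y ∈ K with y ≠ 0 and y^i ≠ 1 for all integers i ≥ 1. Let R ∈ K satisfy y + 1/y = 1/(R-1) (in particular R ≠ 1), and set z = 3R - R^2 - 2. Define, for each integer i ≥ 0, R_i = R·(1-y^i)(1-y^{i+3}) / ((1-y^{i+1})(1-y^{i+2})). Then for all i ≥ 0: z + R_i·R_{i+2} - (R_i + R_{i+1} + R_{i+2}) + 2 = 0. (Explicit solution of the integrable recurrence for distance-dependent generating functions of irreducible quadrangular dissections.) -/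
/-!
The condition on `R` says `R = (1 + y + y²)/(1 + y²)`, so with `a = y ^ i` the recurrence becomes
an identity between rational functions of `y` and `a`. Its denominators `1 - y^k a = 1 - y^(i+k)`
do not vanish because `y` is not a root of unity.
-/

/-- `R_i = R (1-y^i)(1-y^{i+3}) / ((1-y^{i+1})(1-y^{i+2}))`. -/
noncomputable def Rseq {K : Type*} [Field K] (R y : K) (i : ℕ) : K :=
  R * (1 - y ^ i) * (1 - y ^ (i + 3)) / ((1 - y ^ (i + 1)) * (1 - y ^ (i + 2)))

/-- `R_i` as a function of `a = y ^ i`. -/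
noncomputable def quadRatio {K : Type*} [Field K] (R y a : K) : K :=
  R * (1 - a) * (1 - y ^ 3 * a) / ((1 - y * a) * (1 - y ^ 2 * a))

section

variable {K : Type*} [Field K]

theorem Rseq_eq_quadRatio (R y : K) (i : ℕ) : Rseq R y i = quadRatio R y (y ^ i) := by
  simp only [Rseq, quadRatio, pow_add, pow_one, mul_comm]

theorem Rseq_add_eq_quadRatio (R y : K) (i k : ℕ) :
    Rseq R y (i + k) = quadRatio R y (y ^ k * y ^ i) := by
  rw [Rseq_eq_quadRatio, pow_add, mul_comm]

theorem mul_one_add_sq_eq_of_add_one_div_eq {R y : K} (hy0 : y ≠ 0) (hR1 : R ≠ 1)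
    (hR : y + 1 / y = 1 / (R - 1)) : R * (1 + y ^ 2) = 1 + y + y ^ 2 := by
  have hR1' : R - 1 ≠ 0 := sub_ne_zero.mpr hR1
  field_simp at hR
  linear_combination hR

theorem quadRatio_recurrence {R y a : K} (hR : R * (1 + y ^ 2) = 1 + y + y ^ 2)
    (h1 : 1 - y * a ≠ 0) (h2 : 1 - y ^ 2 * a ≠ 0) (h3 : 1 - y ^ 3 * a ≠ 0)
    (h4 : 1 - y ^ 4 * a ≠ 0) :
    (3 * R - R ^ 2 - 2) + quadRatio R y a * quadRatio R y (y ^ 2 * a) -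
        (quadRatio R y a + quadRatio R y (y * a) + quadRatio R y (y ^ 2 * a)) + 2 = 0 := by
  have hy2 : 1 + y ^ 2 ≠ 0 := by
    intro h
    have hy : y = 0 := by linear_combination R * h - hR - h
    simp [hy] at h
  obtain rfl : R = (1 + y + y ^ 2) / (1 + y ^ 2) := by rw [eq_div_iff hy2, hR]
  unfold quadRatio
  field_simp
  ring

end

theorem integrable_recurrence_irreducible_quadrangular {K : Type*} [Field K]
    (y R : K) (hy0 : y ≠ 0) (hy : ∀ i : ℕ, 1 ≤ i → y ^ i ≠ 1)
    (hR1 : R ≠ 1) (hR : y + 1 / y = 1 / (R - 1)) :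
    ∀ i : ℕ,
      (3 * R - R ^ 2 - 2) + Rseq R y i * Rseq R y (i + 2) -
        (Rseq R y i + Rseq R y (i + 1) + Rseq R y (i + 2)) + 2 = 0 := by
  intro i
  have hden (k : ℕ) (hk : 1 ≤ k) : 1 - y ^ k * y ^ i ≠ 0 := by
    rw [← pow_add]
    exact sub_ne_zero.mpr (hy _ (by omega)).symm
  rw [Rseq_add_eq_quadRatio _ _ i 1, Rseq_add_eq_quadRatio _ _ i 2, Rseq_eq_quadRatio, pow_one]
  exact quadRatio_recurrence (mul_one_add_sq_eq_of_add_one_div_eq hy0 hR1 hR)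
    (by simpa using hden 1 le_rfl) (hden 2 (by norm_num)) (hden 3 (by norm_num)) (hden 4 (by norm_num))
end

section
/- Let K be a field and y ∈ K with y ≠ 0, y + 1/y ≠ 1, and y^i ≠ 1 for all integers i ≥ 1. Set T = (y + 1/y)/(y + 1/y - 1) and z = 1/(T·(y + 1/y)) (so that T = 1 + z·T^2 and y + 1/y = 1/(zT)). Define, for each integer i ≥ 0, T_i = T·(1-y^i)(1-y^{i+5}) / ((1-y^{i+2})(1-y^{i+3})). Then T_0 = 0 and for all i ≥ 1: T_i = 1 + z·T_{i-1}·T_{i+1}. (Explicit solution of the integrable recurrence for naturally embedded binary trees; Proposition 25 of Bousquet-Mélou.) -/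
/-!
Write `s = y + 1/y` and `a k = 1 - y ^ k`. Then `T = s/(s-1)` and `z T² = T/s = 1/(s-1)`, and in
`z T_{j} T_{j+2}` the factors `a (j+2)` and `a (j+5)` cancel. Clearing the denominators
`(s-1) a (j+3) a (j+4)`, the recurrence at `i = j+1` becomes the three-term identity
`s a(j+1) a(j+6) = (s-1) a(j+3) a(j+4) + a j a(j+7)`, a polynomial identity in `y` and `y ^ j`.
-/

/-- `T_i = T (1-y^i)(1-y^{i+5}) / ((1-y^{i+2})(1-y^{i+3}))` where
`T = (y+1/y)/(y+1/y-1)`. -/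
noncomputable def Tseq {K : Type*} [Field K] (y : K) (i : ℕ) : K :=
  ((y + 1 / y) / (y + 1 / y - 1)) * (1 - y ^ i) * (1 - y ^ (i + 5)) /
    ((1 - y ^ (i + 2)) * (1 - y ^ (i + 3)))

section
variable {K : Type*} [Field K] {y : K}

theorem one_sub_pow_three_term_identity (hy0 : y ≠ 0) (j : ℕ) :
    (y + 1 / y) * ((1 - y ^ (j + 1)) * (1 - y ^ (j + 6))) =
      (y + 1 / y - 1) * ((1 - y ^ (j + 3)) * (1 - y ^ (j + 4))) +
        (1 - y ^ j) * (1 - y ^ (j + 7)) := by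
  simp only [pow_add]
  field_simp
  ring

theorem add_one_div_ne_zero (hy0 : y ≠ 0) (hy4 : y ^ 4 ≠ 1) : y + 1 / y ≠ 0 := by
  intro h
  have hy2 : y ^ 2 = -1 := by
    field_simp at h
    linear_combination h
  exact hy4 (by linear_combination (y ^ 2 - 1) * hy2)

theorem Tseq_zero (y : K) : Tseq y 0 = 0 := by
  simp [Tseq]

theorem Tseq_succ (hy0 : y ≠ 0) (hy1 : y + 1 / y ≠ 1) (hy : ∀ i : ℕ, 1 ≤ i → y ^ i ≠ 1)
    (j : ℕ) :
    Tseq y (j + 1) =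
      1 + 1 / ((y + 1 / y) / (y + 1 / y - 1) * (y + 1 / y)) * Tseq y j * Tseq y (j + 2) := by
  have ha : ∀ k, 1 ≤ k → 1 - y ^ (j + k) ≠ 0 := fun k hk =>
    sub_ne_zero.mpr fun h => hy (j + k) (by omega) h.symm
  have h2 := ha 2 (by norm_num)
  have h3 := ha 3 (by norm_num)
  have h4 := ha 4 (by norm_num)
  have h5 := ha 5 (by norm_num)
  have hs := add_one_div_ne_zero hy0 (hy 4 (by norm_num))
  have hs1 : y + 1 / y - 1 ≠ 0 := sub_ne_zero.mpr hy1
  have key := one_sub_pow_three_term_identity hy0 j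
  unfold Tseq
  simp only [Nat.add_assoc, Nat.reduceAdd]
  set s := y + 1 / y
  field_simp
  linear_combination key

end

theorem integrable_recurrence_naturally_embedded_binary_trees {K : Type*} [Field K]
    (y : K) (hy0 : y ≠ 0) (hy1 : y + 1 / y ≠ 1) (hy : ∀ i : ℕ, 1 ≤ i → y ^ i ≠ 1) :
    Tseq y 0 = 0 ∧
      ∀ i : ℕ, 1 ≤ i →
        Tseq y i =
          1 + (1 / (((y + 1 / y) / (y + 1 / y - 1)) * (y + 1 / y))) *
              Tseq y (i - 1) * Tseq y (i + 1) := by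
  refine ⟨Tseq_zero y, fun i hi => ?_⟩
  obtain ⟨j, rfl⟩ : ∃ j, i = j + 1 := ⟨i - 1, by omega⟩
  exact Tseq_succ hy0 hy1 hy j
end

section
/- Let K be a field and y ∈ K with y ≠ 0, y + 1/y + 1 ≠ 0, and y^i ≠ 1 for all integers i ≥ 1. Let s ∈ K satisfy y + 1/y + 1 = 1/s^2, and set z = s - s^3. Define, for each integer j ≥ 0, s_j = s·(1-y^j)(1-y^{j+3}) / ((1-y^{j+1})(1-y^{j+2})). Then s_0 = 0 and for all i ≥ 1: z + s_{i-1}·s_i·s_{i+1} - s_i = 0. (Explicit solution of the integrable recurrence for irreducible triangular slices / naturally embedded ternary trees.) -/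
/-!
With `x = y ^ k`, the product `s_k s_{k+1} s_{k+2}` telescopes to
`s³ (1 - x)(1 - x y⁵) / ((1 - x y²)(1 - x y³))`. Clearing the denominator `(1 - x y²)(1 - x y³)`,
the recurrence at `i = k + 1` becomes `x (1 - y)(1 - y²) (s y - s³ (1 + y + y²)) = 0`, and
`s³ (1 + y + y²) = s y` is the hypothesis on `s` multiplied by `s³ y`.
-/

/-- `s_j = s (1-y^j)(1-y^{j+3}) / ((1-y^{j+1})(1-y^{j+2}))`. -/
noncomputable def sseq {K : Type*} [Field K] (s y : K) (j : ℕ) : K :=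
  s * (1 - y ^ j) * (1 - y ^ (j + 3)) / ((1 - y ^ (j + 1)) * (1 - y ^ (j + 2)))

section

variable {K : Type*} [Field K]

theorem sseq_zero (s y : K) : sseq s y 0 = 0 := by
  simp [sseq]

theorem one_sub_pow_ne_zero {y : K} (hy : ∀ i : ℕ, 1 ≤ i → y ^ i ≠ 1) {n : ℕ} (hn : 1 ≤ n) :
    1 - y ^ n ≠ 0 :=
  sub_ne_zero.2 (hy n hn).symm

theorem sseq_mul_sseq_mul_sseq {s y : K} (hy : ∀ i : ℕ, 1 ≤ i → y ^ i ≠ 1) (k : ℕ) :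
    sseq s y k * sseq s y (k + 1) * sseq s y (k + 2) =
      s ^ 3 * (1 - y ^ k) * (1 - y ^ (k + 5)) / ((1 - y ^ (k + 2)) * (1 - y ^ (k + 3))) := by
  have h1 := one_sub_pow_ne_zero hy (n := k + 1) (by omega)
  have h2 := one_sub_pow_ne_zero hy (n := k + 2) (by omega)
  have h3 := one_sub_pow_ne_zero hy (n := k + 3) (by omega)
  have h4 := one_sub_pow_ne_zero hy (n := k + 4) (by omega)
  simp only [sseq, add_assoc, Nat.reduceAdd]
  field_simp

theorem cube_mul_eq_of_add_inv_add_one_eq_inv_sq {s y : K} (hy : y ≠ 0)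
    (hs : y + 1 / y + 1 = 1 / s ^ 2) : s ^ 3 * (y ^ 2 + y + 1) = s * y := by
  rcases eq_or_ne s 0 with rfl | hs0
  · simp
  · field_simp at hs
    linear_combination s * hs

theorem sseq_recurrence {s y : K} (hy : ∀ i : ℕ, 1 ≤ i → y ^ i ≠ 1)
    (hsy : s ^ 3 * (y ^ 2 + y + 1) = s * y) (k : ℕ) :
    (s - s ^ 3) + sseq s y k * sseq s y (k + 1) * sseq s y (k + 2) - sseq s y (k + 1) = 0 := by
  have h2 := one_sub_pow_ne_zero hy (n := k + 2) (by omega)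
  have h3 := one_sub_pow_ne_zero hy (n := k + 3) (by omega)
  rw [sseq_mul_sseq_mul_sseq hy]
  simp only [sseq, add_assoc, Nat.reduceAdd]
  field_simp
  linear_combination -(y ^ k * (1 - y) * (1 - y ^ 2)) * hsy

end

theorem integrable_recurrence_irreducible_triangular_slices_general {K : Type*} [Field K]
    (y s : K) (hy0 : y ≠ 0)
    (hy : ∀ i : ℕ, 1 ≤ i → y ^ i ≠ 1)
    (hs : y + 1 / y + 1 = 1 / s ^ 2) :
    sseq s y 0 = 0 ∧
      ∀ i : ℕ, 1 ≤ i →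
        (s - s ^ 3) + sseq s y (i - 1) * sseq s y i * sseq s y (i + 1) -
          sseq s y i = 0 := by
  refine ⟨sseq_zero s y, fun i hi => ?_⟩
  obtain ⟨k, rfl⟩ := Nat.exists_eq_add_of_le' hi
  simpa using sseq_recurrence hy (cube_mul_eq_of_add_inv_add_one_eq_inv_sq hy0 hs) k

theorem integrable_recurrence_irreducible_triangular_slices {K : Type*} [Field K]
    (y s : K) (hy0 : y ≠ 0) (hy1 : y + 1 / y + 1 ≠ 0)
    (hy : ∀ i : ℕ, 1 ≤ i → y ^ i ≠ 1)
    (hs : y + 1 / y + 1 = 1 / s ^ 2) :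
    sseq s y 0 = 0 ∧
      ∀ i : ℕ, 1 ≤ i →
        (s - s ^ 3) + sseq s y (i - 1) * sseq s y i * sseq s y (i + 1) -
          sseq s y i = 0 :=
  integrable_recurrence_irreducible_triangular_slices_general y s hy0 hy hs
end

section
/- Fix integers m > b ≥ 1. Define the polynomials f(r) = C(2m, m-b) · ∑_{ℓ=0}^{b-1} (-1)^{b-ℓ-1} (b-ℓ)/(m-ℓ) · C(b+ℓ, 2ℓ) · Cat(ℓ) · r^{m-ℓ} and z(r) = -∑_{ℓ=0}^{b} (-1)^{b-ℓ} C(b+ℓ, 2ℓ) Cat(ℓ) r^{b-ℓ}, where Cat(ℓ) = C(2ℓ,ℓ)/(ℓ+1). Then f'(r) = C(2m, m-b) · r^{m-b} · z'(r) as polynomials in r. (General pointing formula for irreducible 2b-angular dissections of the 2m-gon.) -/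
/-!
The identity holds term by term: differentiating the `ℓ`-th term of `f` brings down `m - ℓ`,
which cancels the denominator and leaves `C(2m, m-b) r^{m-b}` times the derivative of the
`ℓ`-th term of `z`; the remaining term `ℓ = b` of `z` is constant.
-/

open Polynomial

-- Applied with `n = b - ℓ`, `k = m - ℓ`.
theorem derivative_C_div_mul_X_pow_eq_X_pow_mul_derivative_neg {K : Type*} [Field K] [CharZero K]
    {n k : ℕ} (h : n ≤ k) (a : K) :
    derivative (C ((-1) ^ (n - 1) * (n : K) / k * a) * X ^ k) =
      X ^ (k - n) * derivative (-(C ((-1) ^ n * a) * X ^ n)) := by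
  obtain _ | n := n
  · simp
  have hk : (k : K) ≠ 0 := by exact_mod_cast (Nat.succ_pos n).trans_le h |>.ne'
  have hcoeff : (-1) ^ n * ((n + 1 : ℕ) : K) / k * a * k = -((-1) ^ (n + 1) * a * (n + 1 : ℕ)) := by
    field_simp
    ring
  rw [derivative_C_mul_X_pow, derivative_neg, derivative_C_mul_X_pow, Nat.add_sub_cancel,
    show k - 1 = k - (n + 1) + n by omega, pow_add, hcoeff, C_neg]
  ring

theorem general_pointing_formula_bipartite_general (m b : ℕ) (hm : b < m) :
    derivative
        (C (Nat.choose (2 * m) (m - b) : ℚ) *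
          ∑ ℓ ∈ Finset.range b,
            C ((-1 : ℚ) ^ (b - ℓ - 1) * ((b : ℚ) - ℓ) / ((m : ℚ) - ℓ) *
                (Nat.choose (b + ℓ) (2 * ℓ) : ℚ) * catQ ℓ) * X ^ (m - ℓ)) =
      C (Nat.choose (2 * m) (m - b) : ℚ) * X ^ (m - b) *
        derivative
          (-∑ ℓ ∈ Finset.range (b + 1),
            C ((-1 : ℚ) ^ (b - ℓ) * (Nat.choose (b + ℓ) (2 * ℓ) : ℚ) * catQ ℓ) *
              X ^ (b - ℓ)) := by
  rw [derivative_C_mul, mul_assoc]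
  congr 1
  rw [Finset.sum_range_succ, Nat.sub_self, pow_zero, pow_zero, mul_one, neg_add, derivative_add,
    derivative_neg (C _), derivative_C, neg_zero, add_zero, ← Finset.sum_neg_distrib,
    derivative_sum, derivative_sum, Finset.mul_sum]
  refine Finset.sum_congr rfl fun ℓ hℓ => ?_
  have hℓb : ℓ ≤ b := (Finset.mem_range.mp hℓ).le
  rw [← Nat.cast_sub hℓb, ← Nat.cast_sub (hℓb.trans hm.le), mul_assoc _ _ (catQ ℓ),
    mul_assoc _ _ (catQ ℓ), show m - b = (m - ℓ) - (b - ℓ) by omega]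
  exact derivative_C_div_mul_X_pow_eq_X_pow_mul_derivative_neg (by omega) _

theorem general_pointing_formula_bipartite (m b : ℕ) (hb : 1 ≤ b) (hm : b < m) :
    derivative
        (C (Nat.choose (2 * m) (m - b) : ℚ) *
          ∑ ℓ ∈ Finset.range b,
            C ((-1 : ℚ) ^ (b - ℓ - 1) * ((b : ℚ) - ℓ) / ((m : ℚ) - ℓ) *
                (Nat.choose (b + ℓ) (2 * ℓ) : ℚ) * catQ ℓ) * X ^ (m - ℓ)) =
      C (Nat.choose (2 * m) (m - b) : ℚ) * X ^ (m - b) *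
        derivative
          (-∑ ℓ ∈ Finset.range (b + 1),
            C ((-1 : ℚ) ^ (b - ℓ) * (Nat.choose (b + ℓ) (2 * ℓ) : ℚ) * catQ ℓ) *
              X ^ (b - ℓ)) :=
  general_pointing_formula_bipartite_general m b hm
end

section
/- Let T ∈ ℚ[[z]] satisfy T = 1 + z·T^2, let r = 1 + z·T and f = 9r^2 - 4r^3 as formal power series in z. Then for every integer n ≥ 0, the coefficient of z^{n+2} in f equals (6/(n+2)) · Cat(n), where Cat(n) = C(2n,n)/(n+1). (The number of irreducible quadrangular dissections of the hexagon with n+2 inner faces.) -/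
/-! The equation `T = 1 + z T²` forces `[zⁿ] T = Cat(n)`. Using it to eliminate `T²` and `T³`
turns `9 r² - 4 r³` into `5 + 7z - zT + 4z²T`, whose coefficient of `z^(n+2)` is
`4 Cat(n) - Cat(n+1)`; the ratio `(n+2) Cat(n+1) = 2(2n+1) Cat(n)` turns this into
`6 Cat(n) / (n+2)`. -/

open PowerSeries Finset

theorem PowerSeries.coeff_eq_catalan_of_eq_one_add_X_mul_sq {R : Type*} [CommSemiring R]
    {T : R⟦X⟧} (hT : T = 1 + X * T ^ 2) (n : ℕ) : coeff n T = catalan n := by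
  induction n using Nat.strong_induction_on with
  | _ n ih =>
    rcases n with _ | m
    · simpa using congrArg constantCoeff hT
    · rw [hT, map_add, coeff_one, sq, coeff_succ_X_mul, coeff_mul, catalan_succ', Nat.cast_sum]
      refine (zero_add _).trans (sum_congr rfl fun p hp => ?_)
      rw [HasAntidiagonal.mem_antidiagonal] at hp
      rw [ih p.1 (by omega), ih p.2 (by omega), Nat.cast_mul]

theorem succ_succ_mul_catalan_succ (n : ℕ) :
    (n + 2) * catalan (n + 1) = 2 * (2 * n + 1) * catalan n := by
  refine Nat.eq_of_mul_eq_mul_left n.succ_pos ?_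
  calc (n + 1) * ((n + 2) * catalan (n + 1))
      = (n + 1) * (n + 1).centralBinom := by rw [← succ_mul_catalan_eq_centralBinom]
    _ = 2 * (2 * n + 1) * n.centralBinom := Nat.succ_mul_centralBinom_succ n
    _ = (n + 1) * (2 * (2 * n + 1) * catalan n) := by
      rw [← succ_mul_catalan_eq_centralBinom]; ring

theorem PowerSeries.coeff_add_two_nine_mul_sq_sub_four_mul_cube {R : Type*} [CommRing R]
    {T : R⟦X⟧} (hT : T = 1 + X * T ^ 2) (n : ℕ) :
    coeff (n + 2) (9 * (1 + X * T) ^ 2 - 4 * (1 + X * T) ^ 3) =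
      4 * coeff n T - coeff (n + 1) T := by
  have hf : 9 * (1 + X * T) ^ 2 - 4 * (1 + X * T) ^ 3 =
      C 5 + X * (C 7 + X * (C 4 * T) - T) := by
    simp only [map_ofNat]
    linear_combination (7 * X + 4 * X ^ 2 * T) * hT
  simp [hf, coeff_C_mul, coeff_succ_X_mul]

theorem catalan_eq_choose_div (n : ℕ) : (catalan n : ℚ) = (2 * n).choose n / (n + 1) := by
  rw [eq_div_iff (by positivity), mul_comm]
  exact_mod_cast succ_mul_catalan_eq_centralBinom n

theorem four_mul_catalan_sub_catalan_succ (n : ℕ) :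
    4 * (catalan n : ℚ) - catalan (n + 1) = 6 / (n + 2) * catalan n := by
  have h : ((n : ℚ) + 2) * catalan (n + 1) = 2 * (2 * n + 1) * catalan n := by
    exact_mod_cast succ_succ_mul_catalan_succ n
  field_simp
  linear_combination -h

theorem count_irreducible_quadrangular_dissections_hexagon
    (T : PowerSeries ℚ) (hT : T = 1 + PowerSeries.X * T ^ 2) :
    ∀ n : ℕ,
      PowerSeries.coeff (n + 2)
          (9 * (1 + PowerSeries.X * T) ^ 2 - 4 * (1 + PowerSeries.X * T) ^ 3) =
        (6 / ((n : ℚ) + 2)) * ((Nat.choose (2 * n) n : ℚ) / (n + 1)) := by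
  intro n
  rw [coeff_add_two_nine_mul_sq_sub_four_mul_cube hT,
    coeff_eq_catalan_of_eq_one_add_X_mul_sq hT, coeff_eq_catalan_of_eq_one_add_X_mul_sq hT,
    four_mul_catalan_sub_catalan_succ, catalan_eq_choose_div]
end

section
/- Let T ∈ ℚ[[z]] satisfy T = 1 + z^2·T^3, let s = z·T and f = 2 + 2s^2 - 3s^4 as formal power series in z. Then for every integer n ≥ 0, the coefficient of z^{2n+2} in f equals (2/(n+1)) · C(3n,n)/(2n+1). (Tutte's count of irreducible triangular dissections of the square with 2n+2 triangles.) -/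
/-!
Put `s = z T`, so that `s = z + s ^ 3`. Differentiating gives `s' (1 - 3 s ^ 2) = 1`, hence
`f' = 4 s (1 - 3 s ^ 2) s' = 4 s` and `[z ^ (2n+2)] f = 2 / (n + 1) · [z ^ (2n+1)] s`.
Combining this relation with its derivative and `z = s - s ^ 3` shows that the algebraic series
`s` satisfies the linear ODE `(4 - 27 z ^ 2) s'' = 27 z s' - 3 s`, i.e. the two-term recurrence
`4 (m + 1) (m + 2) s_(m+2) = (27 m ^ 2 - 3) s_m`, solved by `s_(2k+1) = C(3k, k) / (2k + 1)`.
-/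

open PowerSeries

namespace PowerSeries

variable {R : Type*} [CommRing R] {s : R⟦X⟧}

@[simp]
theorem derivative_ofNat (n : ℕ) [n.AtLeastTwo] : d⁄dX R (ofNat(n) : R⟦X⟧) = 0 := by
  rw [← map_ofNat (C (R := R)) n, derivative_C]

theorem derivative_mul_one_sub_three_mul_sq (hs : s = X + s ^ 3) :
    d⁄dX R s * (1 - 3 * s ^ 2) = 1 := by
  have h := congrArg (d⁄dX R) hs
  simp only [map_add, derivative_X, Derivation.leibniz_pow, smul_eq_mul, nsmul_eq_mul] at h
  push_cast at h
  linear_combination h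

theorem derivative_derivative_mul_one_sub_three_mul_sq (hs : s = X + s ^ 3) :
    d⁄dX R (d⁄dX R s) * (1 - 3 * s ^ 2) = 6 * s * d⁄dX R s ^ 2 := by
  have h := congrArg (d⁄dX R) (derivative_mul_one_sub_three_mul_sq hs)
  simp only [Derivation.leibniz, map_sub, Derivation.map_one_eq_zero, derivative_ofNat,
    Derivation.leibniz_pow, smul_eq_mul, nsmul_eq_mul] at h
  push_cast at h
  linear_combination h

theorem hypergeometric_ode_of_eq_X_add_pow_three (hs : s = X + s ^ 3) :
    (4 - 27 * X ^ 2) * d⁄dX R (d⁄dX R s) = 27 * X * d⁄dX R s - 3 * s := by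
  have hA := derivative_mul_one_sub_three_mul_sq hs
  have hB := derivative_derivative_mul_one_sub_three_mul_sq hs
  have hX : (X : R⟦X⟧) = s - s ^ 3 := by linear_combination -hs
  set p := d⁄dX R s
  set u : R⟦X⟧ := 1 - 3 * s ^ 2
  rw [hX]
  -- multiplying by powers of `p u = 1` clears `u`, leaving a polynomial identity in `s`
  linear_combination (-(4 - 27 * (s - s ^ 3) ^ 2) * d⁄dX R p + 27 * (s - s ^ 3) * p * (1 + u * p)
    - 3 * s * (1 + u * p + (u * p) ^ 2)) * hA + (4 - 27 * (s - s ^ 3) ^ 2) * p * hB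

theorem derivative_two_add_two_mul_sq_sub_three_mul_pow_four (hs : s = X + s ^ 3) :
    d⁄dX R (2 + 2 * s ^ 2 - 3 * s ^ 4) = 4 * s := by
  simp only [map_add, map_sub, Derivation.leibniz, Derivation.leibniz_pow, derivative_ofNat,
    smul_eq_mul, nsmul_eq_mul]
  push_cast
  linear_combination 4 * s * derivative_mul_one_sub_three_mul_sq hs

theorem coeff_add_two_of_hypergeometric_ode
    (h : (4 - 27 * X ^ 2) * d⁄dX R (d⁄dX R s) = 27 * X * d⁄dX R s - 3 * s) (m : ℕ) :
    4 * (m + 1) * (m + 2) * coeff (m + 2) s = (27 * m ^ 2 - 3) * coeff m s := by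
  have h' : C 4 * d⁄dX R (d⁄dX R s) - X ^ 2 * (C 27 * d⁄dX R (d⁄dX R s))
      - X ^ 1 * (C 27 * d⁄dX R s) + C 3 * s = 0 := by
    simp only [map_ofNat]
    linear_combination h
  have hm := congrArg (coeff m) h'
  simp only [map_add, map_sub, coeff_C_mul, coeff_X_pow_mul', coeff_derivative, map_zero] at hm
  rcases m with _ | _ | m <;>
    norm_num [show ∀ k, k + 1 + 1 - 2 = k from fun _ ↦ rfl] at hm ⊢ <;> linear_combination hm

end PowerSeries

theorem Nat.mul_choose_three_mul_add_three (k : ℕ) :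
    2 * (k + 1) * (2 * k + 1) * (3 * k + 3).choose (k + 1) =
      3 * (3 * k + 1) * (3 * k + 2) * (3 * k).choose k := by
  have e1 := Nat.add_one_mul_choose_eq (3 * k + 2) k
  have e2 := Nat.choose_mul_succ_eq (3 * k + 1) k
  have e3 := Nat.choose_mul_succ_eq (3 * k) k
  rw [show 3 * k + 2 + 1 = 3 * k + 3 by ring] at e1
  rw [show 3 * k + 1 + 1 = 3 * k + 2 by ring, show 3 * k + 2 - k = 2 * k + 2 by omega] at e2
  rw [show 3 * k + 1 - k = 2 * k + 1 by omega] at e3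
  zify at e1 e2 e3 ⊢
  linear_combination -2 * (2 * k + 1) * e1 - 3 * (2 * k + 1) * e2 - 3 * (3 * k + 2) * e3

theorem eq_choose_div_of_recurrence {a : ℕ → ℚ} (h1 : a 1 = 1)
    (hrec : ∀ m : ℕ, 4 * (m + 1) * (m + 2) * a (m + 2) = (27 * m ^ 2 - 3) * a m) (k : ℕ) :
    a (2 * k + 1) = (3 * k).choose k / (2 * k + 1) := by
  induction k with
  | zero => simpa using h1
  | succ k ih =>
    have hstep := hrec (2 * k + 1)
    have hchoose : (2 * (k + 1) * (2 * k + 1) * (3 * k + 3).choose (k + 1) : ℚ) =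
        3 * (3 * k + 1) * (3 * k + 2) * (3 * k).choose k := by
      exact_mod_cast Nat.mul_choose_three_mul_add_three k
    rw [show 2 * k + 1 + 2 = 2 * (k + 1) + 1 by ring, ih] at hstep
    rw [show 3 * (k + 1) = 3 * k + 3 by ring, eq_div_iff (by positivity)]
    have hne : (8 * (k + 1) * (2 * k + 1) : ℚ) ≠ 0 := by positivity
    apply mul_left_cancel₀ hne
    field_simp at hstep
    push_cast at hstep ⊢
    linear_combination hstep - 4 * hchoose

theorem count_irreducible_triangular_dissections_square
    (T : PowerSeries ℚ) (hT : T = 1 + PowerSeries.X ^ 2 * T ^ 3) :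
    ∀ n : ℕ,
      PowerSeries.coeff (2 * n + 2)
          (2 + 2 * (PowerSeries.X * T) ^ 2 - 3 * (PowerSeries.X * T) ^ 4) =
        (2 / ((n : ℚ) + 1)) * ((Nat.choose (3 * n) n : ℚ) / (2 * n + 1)) := by
  intro n
  set s := X * T with hs_def
  have hs : s = X + s ^ 3 := by
    rw [hs_def]
    linear_combination X * hT
  have hs1 : coeff 1 s = 1 := by
    rw [hs_def, coeff_succ_X_mul, coeff_zero_eq_constantCoeff, hT]
    simp
  have hodd := eq_choose_div_of_recurrence (a := fun m ↦ coeff m s) hs1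
    (coeff_add_two_of_hypergeometric_ode (hypergeometric_ode_of_eq_X_add_pow_three hs))
  have hf := congrArg (coeff (2 * n + 1)) (derivative_two_add_two_mul_sq_sub_three_mul_pow_four hs)
  rw [coeff_derivative, ← map_ofNat C 4, coeff_C_mul, hodd] at hf
  rw [show 2 * n + 2 = 2 * n + 1 + 1 from rfl, eq_div_of_mul_eq (by positivity) hf]
  push_cast
  field_simp
  ring
end

section
/- Let R be a commutative ring, let v₋₁, v₀ ∈ R, and let (v_k)_{k≥1} be a sequence in R satisfying, for all k ≥ -1, the recursion v_k = ∑_{m=1}^{k+1} v_m · v_{k-m} + v_{k+2}. Let V(t) = ∑_{k≥1} v_k t^k ∈ R[[t]]. Then the formal power series identity (1 - V(t)) · (t·v₋₁ + t^2·(v₀ + V(t))) = V(t) holds in R[[t]]. (Generating function form of the recursive slice decomposition equations.) -/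
/-!
The second factor is the series of the shifted sequence `k ↦ v (k - 2)` (its coefficients at
`t` and `t²` are `v (-1)` and `v 0`). Hence the coefficient of `tⁿ`, `n ≥ 1`, on the left is
`v (n - 2) - ∑_{m=1}^{n-1} v m * v (n - 2 - m)`, which is `v n` by the recursion at `k = n - 2`.
-/

open PowerSeries Finset

namespace PowerSeries

variable {R : Type*} [CommRing R]

def mkPos (a : ℤ → R) : R⟦X⟧ :=
  mk fun n : ℕ => if n = 0 then 0 else a n

@[simp]
theorem coeff_mkPos (a : ℤ → R) (n : ℕ) :
    coeff n (mkPos a) = if n = 0 then 0 else a n :=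
  coeff_mk _ _

@[simp]
theorem constantCoeff_mkPos (a : ℤ → R) : constantCoeff (mkPos a) = 0 := by
  rw [← coeff_zero_eq_constantCoeff_apply, coeff_mkPos, if_pos rfl]

theorem mkPos_comp_sub_two (a : ℤ → R) :
    mkPos (fun k => a (k - 2)) = C (a (-1)) * X + (C (a 0) + mkPos a) * X ^ 2 := by
  ext (_ | _ | _ | n) <;> simp [coeff_mul_X_pow', coeff_C]
  ring_nf

theorem coeff_mkPos_mul_mkPos (a b : ℤ → R) (n : ℕ) :
    coeff n (mkPos a * mkPos b) = ∑ m ∈ Icc (1 : ℤ) (n - 1), a m * b (n - m) := by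
  rw [coeff_mul]
  symm
  -- `m ↦ (m, n - m)` hits exactly the antidiagonal pairs with both entries positive.
  refine sum_of_injOn (fun m => (m.toNat, n - m.toNat)) ?_ ?_ ?_ ?_
  · intro m hm m' hm' h
    simp only [coe_Icc, Set.mem_Icc] at hm hm'
    simp only [Prod.mk.injEq] at h
    omega
  · intro m hm
    simp only [coe_Icc, Set.mem_Icc] at hm
    rw [mem_coe, HasAntidiagonal.mem_antidiagonal]
    dsimp only
    omega
  · rintro ⟨i, j⟩ hij hnot
    rw [HasAntidiagonal.mem_antidiagonal] at hij
    rcases Nat.eq_zero_or_pos i with rfl | hi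
    · simp
    rcases Nat.eq_zero_or_pos j with rfl | hj
    · simp
    refine absurd ⟨(i : ℤ), ?_, ?_⟩ hnot
    · simp only [coe_Icc, Set.mem_Icc]
      omega
    · simp only [Int.toNat_natCast, Prod.mk.injEq, true_and]
      omega
  · intro m hm
    rw [mem_Icc] at hm
    have h1 : m.toNat ≠ 0 := by omega
    have h2 : n - m.toNat ≠ 0 := by omega
    simp only [coeff_mkPos, h1, h2, if_false]
    push_cast [Nat.cast_sub (show m.toNat ≤ n by omega), Int.toNat_of_nonneg (show 0 ≤ m by omega)]
    rfl

end PowerSeries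

theorem slice_decomposition_generating_function_identity
    {R : Type*} [CommRing R] (v : ℤ → R)
    (hrec : ∀ k : ℤ, -1 ≤ k →
      v k = (∑ m ∈ Finset.Icc (1 : ℤ) (k + 1), v m * v (k - m)) + v (k + 2)) :
    (1 - PowerSeries.mk fun n : ℕ => if n = 0 then 0 else v (n : ℤ)) *
        (PowerSeries.C (R := R) (v (-1)) * PowerSeries.X +
          (PowerSeries.C (R := R) (v 0) +
              PowerSeries.mk fun n : ℕ => if n = 0 then 0 else v (n : ℤ)) *
            PowerSeries.X ^ 2) =
      PowerSeries.mk fun n : ℕ => if n = 0 then 0 else v (n : ℤ) := by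
  change (1 - mkPos v) * (C (v (-1)) * X + (C (v 0) + mkPos v) * X ^ 2) = mkPos v
  rw [← mkPos_comp_sub_two, sub_mul, one_mul]
  ext n
  rw [map_sub, coeff_mkPos_mul_mkPos, coeff_mkPos, coeff_mkPos]
  split_ifs with hn
  · simp [hn]
  · have hk := hrec (n - 2) (by omega)
    rw [sub_add_cancel, show (n : ℤ) - 2 + 1 = n - 1 by ring] at hk
    simp_rw [sub_right_comm (n : ℤ) _ 2]
    rw [hk, add_sub_cancel_left]
end
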